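/- For r = 1, …, n, the elementary symmetric polynomial satisfies e_r(x₁,…,xₙ) = Σ_{s=r}^{n} (-β)^{s-r} · C(s-1, s-r) · G_{1^s}(x₁,…,xₙ), where G_{1^s} is the ordinary (non-factorial) Grothendieck polynomial indexed by a single column of length s, given by the determinant formula G_{1^s}(x) = det(x_j^{θ_i + n - i}(1+βx_j)^{i-1})/det(x_j^{n-i}) with θ = (1,…,1,0,…,0) having s ones. -/

import Mathlib

open Finset Polynomial Matrix

namespace GrothAux

variable {K : Type*} [Field K]

lemma rowid {R : Type*} [CommRing R] (β z : R) (a e : ℕ) :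
    z ^ a * (1 + β * z) ^ (e + 1)
      = z ^ a * (1 + β * z) ^ e + β * (z ^ (a + 1) * (1 + β * z) ^ e) := by
  rw [pow_succ]; ring

lemma val_sa {N : ℕ} (s : Fin (N + 1)) (i : Fin N) :
    (s.succAbove i).val = if i.val < s.val then i.val else i.val + 1 := by
  have hiff : i.castSucc < s ↔ i.val < s.val := by
    rw [Fin.lt_def, Fin.coe_castSucc]
  rw [Fin.succAbove]
  split_ifs with h1 h2 h3
  · rfl
  · exact absurd (hiff.mp h1) h2
  · exact absurd (hiff.mpr h3) h1
  · rfl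

/-- The row function. -/
def qf' {R : Type*} [CommRing R] (N : ℕ) (β : R) (k : ℕ) (z : R) : R :=
  if k = 0 then z ^ (N + 1) else z ^ (N + 1 - k) * (1 + β * z) ^ (k - 1)

/-- big reduction: det of qf-matrix equals det of pure-power matrix -/
lemma det_qf_big {R : Type*} [CommRing R] (N : ℕ) (β : R) (w : Fin (N + 1) → R) :
    Matrix.det (Matrix.of fun k l : Fin (N + 1) =>
        if k.val = 0 then w l ^ N else w l ^ (N - k.val) * (1 + β * w l) ^ (k.val - 1))
      = Matrix.det (Matrix.of fun k l : Fin (N + 1) => w l ^ (N - k.val)) := by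
  set Tmat : ℕ → Matrix (Fin (N + 1)) (Fin (N + 1)) R := fun t =>
    Matrix.of fun k l =>
      if k.val = 0 then w l ^ N else w l ^ (N - k.val) * (1 + β * w l) ^ (k.val - 1 - t)
    with hTmat
  have hstep : ∀ t, (Tmat t).det = (Tmat (t + 1)).det := by
    intro t
    apply Matrix.det_eq_of_forall_row_eq_smul_add_pred
      (c := fun i : Fin N => if t + 1 ≤ i.val then β else 0)
    · intro j; simp [hTmat]
    · intro i j
      simp only [hTmat, Matrix.of_apply, Fin.val_succ, Fin.coe_castSucc,
        Nat.succ_ne_zero, if_false, Nat.add_sub_cancel]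
      by_cases h : t + 1 ≤ i.val
      · rw [if_pos h]
        have hi0 : i.val ≠ 0 := by omega
        rw [if_neg hi0]
        have e1 : i.val - t = (i.val - (t + 1)) + 1 := by omega
        have e2 : N - i.val = (N - (i.val + 1)) + 1 := by omega
        have e3 : i.val - 1 - t = i.val - (t + 1) := by omega
        rw [e1, e3, rowid, e2]
      · rw [if_neg h]
        have : i.val - t = i.val - (t + 1) := by omega
        rw [this, zero_mul, add_zero]
  have hiter : ∀ t, (Tmat 0).det = (Tmat t).det := by
    intro t
    induction t with
    | zero => rfl
    | succ t ih => exact ih.trans (hstep t)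
  have h0 : Matrix.det (Matrix.of fun k l : Fin (N + 1) =>
      if k.val = 0 then w l ^ N else w l ^ (N - k.val) * (1 + β * w l) ^ (k.val - 1))
      = (Tmat 0).det := rfl
  rw [h0, hiter N]
  congr 1; ext k l
  have hk : k.val - 1 - N = 0 := by omega
  simp only [hTmat, Matrix.of_apply, hk, pow_zero, mul_one]
  by_cases h : k.val = 0
  · rw [if_pos h, h, Nat.sub_zero]
  · rw [if_neg h]

/-- small reduction -/
lemma det_shift_small {R : Type*} [CommRing R] (N : ℕ) (β : R) (w : Fin (N + 1) → R) :
    Matrix.det (Matrix.of fun k l : Fin (N + 1) =>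
        w l ^ (N - k.val) * (1 + β * w l) ^ k.val)
      = Matrix.det (Matrix.of fun k l : Fin (N + 1) => w l ^ (N - k.val)) := by
  set Amat : ℕ → Matrix (Fin (N + 1)) (Fin (N + 1)) R := fun t =>
    Matrix.of fun k l => w l ^ (N - k.val) * (1 + β * w l) ^ (k.val - t) with hAmat
  have hstep : ∀ t, (Amat t).det = (Amat (t + 1)).det := by
    intro t
    apply Matrix.det_eq_of_forall_row_eq_smul_add_pred
      (c := fun i : Fin N => if t ≤ i.val then β else 0)
    · intro j; simp [hAmat]
    · intro i j
      simp only [hAmat, Matrix.of_apply, Fin.val_succ, Fin.coe_castSucc]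
      by_cases h : t ≤ i.val
      · rw [if_pos h]
        have e1 : i.val + 1 - t = (i.val + 1 - (t + 1)) + 1 := by omega
        have e2 : i.val + 1 - (t + 1) = i.val - t := by omega
        have e3 : N - i.val = (N - (i.val + 1)) + 1 := by omega
        rw [e1, e2, rowid, e3]
      · rw [if_neg h]
        have : i.val + 1 - t = i.val + 1 - (t + 1) := by omega
        rw [this, zero_mul, add_zero]
  have hiter : ∀ t, (Amat 0).det = (Amat t).det := by
    intro t
    induction t with
    | zero => rfl
    | succ t ih => exact ih.trans (hstep t)
  have h0 : Matrix.det (Matrix.of fun k l : Fin (N + 1) =>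
      w l ^ (N - k.val) * (1 + β * w l) ^ k.val) = (Amat 0).det := rfl
  rw [h0, hiter (N + 1)]
  congr 1; ext k l
  have hk : k.val - (N + 1) = 0 := by omega
  simp [hAmat, hk]

lemma det_M {R : Type*} [CommRing R] (N : ℕ) (β : R) (w : Fin (N + 1) → R)
    (s : ℕ) (hs1 : 1 ≤ s) (hs : s ≤ N + 1) :
    Matrix.det (Matrix.of fun i j : Fin (N + 1) =>
        w j ^ ((if i.val < s then 1 else 0) + (N - i.val)) * (1 + β * w j) ^ i.val)
      = Matrix.det (Matrix.of fun i j : Fin (N + 1) =>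
          qf' N β (if i.val < s then i.val else i.val + 1) (w j)) := by
  have h0 : (0 : ℕ) < s := hs1
  apply Matrix.det_eq_of_forall_row_eq_smul_add_pred
    (c := fun i : Fin N => if i.val + 1 < s then β else 0)
  · intro j
    simp only [Matrix.of_apply, Fin.val_zero, if_pos h0, qf', if_true, eq_self_iff_true,
      pow_zero, mul_one]
    congr 1
    simp [h0, add_comm]
  · intro i j
    simp only [Matrix.of_apply, Fin.val_succ, Fin.coe_castSucc]
    by_cases h : i.val + 1 < s
    · have hi : i.val < s := by omega
      simp only [if_pos h, if_pos hi]
      have h1 : i.val + 1 ≠ 0 := by omega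
      rw [qf', if_neg h1]
      have e1 : 1 + (N - (i.val + 1)) = N - i.val := by omega
      have e2 : N + 1 - (i.val + 1) = N - i.val := by omega
      have e3 : 1 + (N - i.val) = (N - i.val) + 1 := by omega
      have e4 : i.val + 1 - 1 = i.val := by omega
      rw [e1, e2, e3, e4, rowid]
    · simp only [if_neg h, zero_mul, add_zero, zero_add]
      have h2 : i.val + 1 + 1 ≠ 0 := by omega
      rw [qf', if_neg h2]
      have e1 : N - (i.val + 1) = N + 1 - (i.val + 1 + 1) := by omega
      have e2 : i.val + 1 + 1 - 1 = i.val + 1 := by omega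
      rw [e1, e2]

lemma det_W (m : ℕ) (x : Fin (m + 1) → K) :
    ∃ c : K, Matrix.det (Matrix.of fun k l : Fin (m + 2) =>
        (Fin.cons X (fun j => C (x j)) : Fin (m + 2) → K[X]) l ^ (m + 1 - k.val))
      = C c * ∏ j, (X - C (x j)) := by
  set w : Fin (m + 2) → K[X] := Fin.cons X (fun j => C (x j)) with hw
  have h1 : (Matrix.of fun k l : Fin (m + 2) => w l ^ (m + 1 - k.val))
      = ((Matrix.vandermonde w).submatrix id ⇑(Fin.revPerm : Equiv.Perm (Fin (m + 2))))ᵀ := by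
    ext k l
    have hv : ((Fin.revPerm k : Fin (m + 2)) : ℕ) = m + 1 - k.val := by
      show ((Fin.rev k : Fin (m + 2)) : ℕ) = m + 1 - k.val
      rw [Fin.val_rev]
      omega
    simp only [Matrix.transpose_apply, Matrix.submatrix_apply, Matrix.vandermonde,
      Matrix.of_apply, id, hv]
  obtain ⟨ε, hε⟩ : ∃ ε : K,
      (((Equiv.Perm.sign (Fin.revPerm : Equiv.Perm (Fin (m + 2)))) : ℤ) : K[X]) = C ε := by
    rcases Int.units_eq_one_or (Equiv.Perm.sign (Fin.revPerm : Equiv.Perm (Fin (m + 2)))) with h | h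
    · refine ⟨1, ?_⟩; rw [h]; simp
    · refine ⟨-1, ?_⟩; rw [h]; simp
  refine ⟨ε * ((-1) ^ (m + 1) *
      ∏ i : Fin (m + 1), ∏ j ∈ Ioi i, (x j - x i)), ?_⟩
  rw [h1, Matrix.det_transpose, Matrix.det_permute', Matrix.det_vandermonde]
  rw [Fin.prod_univ_succ]
  have hF0 : (∏ j ∈ Ioi (0 : Fin (m + 2)), (w j - w 0))
      = (-1) ^ (m + 1) * ∏ j : Fin (m + 1), (X - C (x j)) := by
    rw [Fin.prod_Ioi_zero]
    have hterm : ∀ j : Fin (m + 1), w j.succ - w 0 = (-1) * (X - C (x j)) := by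
      intro j
      simp only [hw, Fin.cons_succ, Fin.cons_zero]
      ring
    rw [Finset.prod_congr rfl (fun j _ => hterm j), Finset.prod_mul_distrib,
      Finset.prod_const, Finset.card_univ]
    simp
  have hFi : ∀ i : Fin (m + 1), (∏ j ∈ Ioi i.succ, (w j - w i.succ))
      = C (∏ j ∈ Ioi i, (x j - x i)) := by
    intro i
    rw [Fin.prod_Ioi_succ, map_prod]
    refine Finset.prod_congr rfl fun j _ => ?_
    simp [hw]
  rw [hF0, Finset.prod_congr rfl (fun i _ => hFi i), ← map_prod, hε]
  rw [C_mul, C_mul, map_pow, map_neg, Polynomial.C_1]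
  ring

lemma PP_expand (m : ℕ) (β : K) {k : ℕ} (hk1 : 1 ≤ k) :
    qf' m (C β) k (X : K[X])
      = ∑ t ∈ range k, C (β ^ t * (Nat.choose (k - 1) t : K)) * X ^ (m + 1 - k + t) := by
  rw [qf', if_neg (by omega)]
  rw [add_comm (1 : K[X]) (C β * X), add_pow]
  have hkk : k - 1 + 1 = k := by omega
  rw [hkk, Finset.mul_sum]
  refine Finset.sum_congr rfl fun t ht => ?_
  rw [one_pow, mul_one, mul_pow, ← map_pow, C_mul, pow_add]
  rw [map_natCast (C : K →+* K[X])]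
  ring

lemma PP_coeff_top (m : ℕ) (β : K) {k : ℕ} (hk1 : 1 ≤ k) (hk : k ≤ m + 1) :
    (qf' m (C β) k (X : K[X])).coeff (m + 1) = 0 := by
  rw [PP_expand m β hk1, finset_sum_coeff]
  refine Finset.sum_eq_zero fun t ht => ?_
  have ht' := mem_range.mp ht
  rw [coeff_C_mul, coeff_X_pow, if_neg (by omega), mul_zero]

lemma PP_coeff_mid (m : ℕ) (β : K) {k r : ℕ} (hk1 : 1 ≤ k) (hk : k ≤ m + 1)
    (hr1 : 1 ≤ r) (hr : r ≤ m + 1) :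
    (qf' m (C β) k (X : K[X])).coeff (m + 1 - r)
      = if r ≤ k then β ^ (k - r) * (Nat.choose (k - 1) (k - r) : K) else 0 := by
  rw [PP_expand m β hk1, finset_sum_coeff]
  by_cases hrk : r ≤ k
  · rw [if_pos hrk]
    rw [Finset.sum_eq_single_of_mem (k - r) (mem_range.mpr (by omega))]
    · rw [coeff_C_mul, coeff_X_pow, if_pos (by omega), mul_one]
    · intro t ht hne
      have ht' := mem_range.mp ht
      rw [coeff_C_mul, coeff_X_pow, if_neg (by omega), mul_zero]
  · rw [if_neg hrk]
    refine Finset.sum_eq_zero fun t ht => ?_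
    have ht' := mem_range.mp ht
    rw [coeff_C_mul, coeff_X_pow, if_neg (by omega), mul_zero]

lemma coeff_term (e : ℕ) (a : K) (p : K[X]) (q : ℕ) :
    (((-1 : K[X])) ^ e * p * C a).coeff q = (-1 : K) ^ e * p.coeff q * a := by
  have h1 : ((-1 : K[X])) ^ e = C ((-1 : K) ^ e) := by
    rw [map_pow, map_neg, C_1]
  rw [h1, mul_assoc, coeff_C_mul, coeff_mul_C, mul_assoc]

lemma Q_coeff_top (m : ℕ) (x : Fin (m + 1) → K) :
    (∏ j : Fin (m + 1), (X - C (x j))).coeff (m + 1) = 1 := by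
  have hmon : (∏ j : Fin (m + 1), (X - C (x j))).Monic :=
    monic_prod_of_monic _ _ fun j _ => monic_X_sub_C _
  have hdeg : (∏ j : Fin (m + 1), (X - C (x j))).natDegree = m + 1 := by
    rw [natDegree_prod_of_monic _ _ fun j _ => monic_X_sub_C _]
    simp [natDegree_X_sub_C]
  have h := hmon.coeff_natDegree
  rwa [hdeg] at h

lemma Q_coeff_mid (m r : ℕ) (x : Fin (m + 1) → K) (hr1 : 1 ≤ r) (hr : r ≤ m + 1) :
    (∏ j : Fin (m + 1), (X - C (x j))).coeff (m + 1 - r)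
      = (-1) ^ r * ∑ S ∈ Finset.univ.powersetCard r, ∏ i ∈ S, x i := by
  have hQ : (∏ j : Fin (m + 1), (X - C (x j)))
      = ((Finset.univ.val.map x).map fun t => X - C t).prod := by
    rw [Finset.prod_eq_multiset_prod, Multiset.map_map]
    rfl
  have hcard : Multiset.card (Finset.univ.val.map x) = m + 1 := by
    simp
  rw [hQ, Multiset.prod_X_sub_C_coeff _ (by rw [hcard]; omega)]
  rw [hcard]
  have hrr : m + 1 - (m + 1 - r) = r := by omega
  rw [hrr, Finset.esymm_map_val]

lemma detD_ne (m : ℕ) (x : Fin (m + 1) → K) (hx : ∀ i j, i ≠ j → x i ≠ x j) :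
    Matrix.det (Matrix.of fun i j : Fin (m + 1) => x j ^ (m - i.val)) ≠ 0 := by
  have h1 : (Matrix.of fun i j : Fin (m + 1) => x j ^ (m - i.val))
      = ((Matrix.vandermonde x).submatrix id ⇑(Fin.revPerm : Equiv.Perm (Fin (m + 1))))ᵀ := by
    ext i j
    have hv : ((Fin.revPerm i : Fin (m + 1)) : ℕ) = m - i.val := by
      show ((Fin.rev i : Fin (m + 1)) : ℕ) = m - i.val
      rw [Fin.val_rev]
      omega
    simp only [Matrix.transpose_apply, Matrix.submatrix_apply, Matrix.vandermonde,
      Matrix.of_apply, id, hv]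
  have hvd : (Matrix.vandermonde x).det ≠ 0 := by
    rw [Matrix.det_vandermonde_ne_zero_iff]
    intro a b hab
    by_contra hne
    exact hx a b hne hab
  rw [h1, Matrix.det_transpose, Matrix.det_permute']
  rcases Int.units_eq_one_or (Equiv.Perm.sign (Fin.revPerm : Equiv.Perm (Fin (m + 1)))) with h | h <;>
    rw [h] <;> simpa using hvd

end GrothAux

open GrothAux

/-- The ordinary (non-factorial) Grothendieck polynomial `G_θ(x)` for a
partition `θ` (given as `θ : Fin n → ℕ`, 0-based), defined by the determinant
quotient `det[x_j^{θ_i+n-i}(1+βx_j)^{i-1}] / det[x_j^{n-i}]`. -/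
noncomputable def grothDet {K : Type*} [Field K] {n : ℕ} (β : K) (x : Fin n → K)
    (θ : Fin n → ℕ) : K :=
  Matrix.det (Matrix.of fun i j : Fin n =>
      x j ^ (θ i + (n - 1 - i.val)) * (1 + β * x j) ^ i.val)
    / Matrix.det (Matrix.of fun i j : Fin n => x j ^ (n - 1 - i.val))

/-- For `r = 1,…,n`: the elementary symmetric polynomial satisfies
`e_r(x) = Σ_{s=r}^n (-β)^{s-r} C(s-1, s-r) G_{1^s}(x)`, where `G_{1^s}` is the
Grothendieck polynomial for a single column of length `s`. -/
theorem esymm_in_terms_of_column_grothendieck {K : Type*} [Field K] (n : ℕ) (β : K)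
    (x : Fin n → K) (hx : ∀ i j, i ≠ j → x i ≠ x j)
    (r : ℕ) (hr1 : 1 ≤ r) (hrn : r ≤ n) :
    (∑ S ∈ Finset.univ.powersetCard r, ∏ i ∈ S, x i)
      = ∑ s ∈ Finset.Icc r n, (-β) ^ (s - r) * (Nat.choose (s - 1) (s - r) : K)
          * grothDet β x (fun i => if i.val < s then 1 else 0) := by
  classical
  obtain ⟨m, rfl⟩ : ∃ m, n = m + 1 := ⟨n - 1, by omega⟩
  -- the minors
  set ds : ℕ → K := fun s => Matrix.det (Matrix.of fun i j : Fin (m + 1) =>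
      qf' m β (if i.val < s then i.val else i.val + 1) (x j)) with hds
  -- denominator equals ds 0
  have hden : Matrix.det (Matrix.of fun i j : Fin (m + 1) => x j ^ (m - i.val)) = ds 0 := by
    have hmat : (Matrix.of fun i j : Fin (m + 1) =>
        qf' m β (if i.val < 0 then i.val else i.val + 1) (x j))
        = Matrix.of fun i j : Fin (m + 1) => x j ^ (m - i.val) * (1 + β * x j) ^ i.val := by
      refine Matrix.ext fun i j => ?_
      simp only [Matrix.of_apply, Nat.not_lt_zero, if_false]
      rw [qf', if_neg (Nat.succ_ne_zero _),
        show m + 1 - (i.val + 1) = m - i.val from by omega,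
        show i.val + 1 - 1 = i.val from by omega]
    have h2 : ds 0 = Matrix.det (Matrix.of fun i j : Fin (m + 1) =>
        x j ^ (m - i.val) * (1 + β * x j) ^ i.val) := congrArg Matrix.det hmat
    rw [h2]
    exact (det_shift_small m β x).symm
  have hD0 : ds 0 ≠ 0 := by
    rw [← hden]
    exact detD_ne m x hx
  -- numerators
  have hnum : ∀ s, 1 ≤ s → s ≤ m + 1 →
      Matrix.det (Matrix.of fun i j : Fin (m + 1) =>
        x j ^ ((if i.val < s then 1 else 0) + (m - i.val)) * (1 + β * x j) ^ i.val) = ds s := by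
    intro s hs1 hs2
    exact det_M m β x s hs1 hs2
  -- the big polynomial matrix
  set w : Fin (m + 2) → K[X] := Fin.cons X (fun j => C (x j)) with hw
  set T : Matrix (Fin (m + 2)) (Fin (m + 2)) K[X] :=
      Matrix.of (fun k l => qf' m (C β) k.val (w l)) with hT
  have hTW : T.det = Matrix.det (Matrix.of fun k l : Fin (m + 2) => w l ^ (m + 1 - k.val)) := by
    have h : T = Matrix.of (fun k l : Fin (m + 2) =>
        if k.val = 0 then w l ^ (m + 1)
        else w l ^ (m + 1 - k.val) * (1 + C β * w l) ^ (k.val - 1)) := rfl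
    rw [h]
    exact det_qf_big (m + 1) (C β) w
  obtain ⟨c, hWc⟩ := det_W m x
  rw [← hw] at hWc
  -- Laplace expansion
  have hLap : T.det = ∑ k : Fin (m + 2),
      (-1 : K[X]) ^ k.val * qf' m (C β) k.val X * C (ds k.val) := by
    rw [Matrix.det_succ_column_zero]
    refine Finset.sum_congr rfl fun k _ => ?_
    have h1 : T k 0 = qf' m (C β) k.val X := by
      simp only [hT, Matrix.of_apply, hw, Fin.cons_zero]
    have h2 : (T.submatrix k.succAbove Fin.succ).det = C (ds k.val) := by
      have hsub : T.submatrix k.succAbove Fin.succ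
          = (Matrix.of fun i j : Fin (m + 1) =>
              qf' m β (if i.val < k.val then i.val else i.val + 1) (x j)).map
              ⇑(C : K →+* K[X]) := by
        refine Matrix.ext fun i j => ?_
        simp only [Matrix.submatrix_apply, Matrix.map_apply, Matrix.of_apply, hT, hw,
          Fin.cons_succ]
        rw [val_sa]
        by_cases ha : (if i.val < k.val then i.val else i.val + 1) = 0
        · rw [qf', qf', if_pos ha, if_pos ha, map_pow]
        · rw [qf', qf', if_neg ha, if_neg ha, _root_.map_mul, map_pow, map_pow,
            _root_.map_add, _root_.map_one, _root_.map_mul]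
      rw [hsub]
      exact ((C : K →+* K[X]).map_det _).symm
    rw [h1, h2]
  have hEq : (∑ k : Fin (m + 2), (-1 : K[X]) ^ k.val * qf' m (C β) k.val X * C (ds k.val))
      = C c * ∏ j : Fin (m + 1), (X - C (x j)) := by
    rw [← hLap, hTW]
    exact hWc
  -- coefficient at m+1 : gives ds 0 = c
  have htop : ds 0 = c := by
    have h := congrArg (fun p : K[X] => p.coeff (m + 1)) hEq
    simp only [finset_sum_coeff, coeff_term, coeff_C_mul] at h
    rw [Q_coeff_top, mul_one, Fin.sum_univ_succ] at h
    have h00 : (qf' m (C β) (0 : ℕ) (X : K[X])).coeff (m + 1) = 1 := by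
      rw [qf', if_pos rfl, coeff_X_pow, if_pos rfl]
    have hrest : ∀ k : Fin (m + 1),
        (-1 : K) ^ ((Fin.succ k : Fin (m + 2)).val) *
          (qf' m (C β) ((Fin.succ k : Fin (m + 2)).val) (X : K[X])).coeff (m + 1) *
          ds ((Fin.succ k : Fin (m + 2)).val) = 0 := by
      intro k
      rw [PP_coeff_top m β (by simp [Fin.val_succ]) (by simp [Fin.val_succ]; omega)]
      ring
    rw [Finset.sum_eq_zero fun k _ => hrest k] at h
    simp only [Fin.val_zero, pow_zero, one_mul, add_zero] at h
    rwa [h00, one_mul] at h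
  -- coefficient at m+1-r
  have hmid : (∑ k : Fin (m + 1),
        (-1 : K) ^ (k.val + 1) *
          (if r ≤ k.val + 1 then β ^ (k.val + 1 - r) * (Nat.choose (k.val + 1 - 1) (k.val + 1 - r) : K) else 0) *
          ds (k.val + 1))
      = c * ((-1) ^ r * ∑ S ∈ Finset.univ.powersetCard r, ∏ i ∈ S, x i) := by
    have h := congrArg (fun p : K[X] => p.coeff (m + 1 - r)) hEq
    simp only [finset_sum_coeff, coeff_term, coeff_C_mul] at h
    rw [Q_coeff_mid m r x hr1 hrn, Fin.sum_univ_succ] at h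
    have h00 : (qf' m (C β) (0 : ℕ) (X : K[X])).coeff (m + 1 - r) = 0 := by
      rw [qf', if_pos rfl, coeff_X_pow, if_neg (by omega)]
    rw [show ((0 : Fin (m + 2)).val) = 0 from rfl, h00] at h
    simp only [mul_zero, zero_mul, zero_add, Fin.val_succ] at h
    rw [← h]
    refine Finset.sum_congr rfl fun k _ => ?_
    rw [PP_coeff_mid m β (by omega) (by omega) hr1 hrn]
  -- now convert the Fin-sum into the Icc-sum
  set F : ℕ → K := fun s =>
      (-1 : K) ^ s *
        (if r ≤ s then β ^ (s - r) * (Nat.choose (s - 1) (s - r) : K) else 0) * ds s with hF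
  have hFin : (∑ k : Fin (m + 1),
        (-1 : K) ^ (k.val + 1) *
          (if r ≤ k.val + 1 then β ^ (k.val + 1 - r) * (Nat.choose (k.val + 1 - 1) (k.val + 1 - r) : K) else 0) *
          ds (k.val + 1)) = ∑ v ∈ range (m + 1), F (v + 1) := by
    rw [← Fin.sum_univ_eq_sum_range (fun v => F (v + 1)) (m + 1)]
  have hshift : ∑ v ∈ range (m + 1), F (v + 1) = ∑ s ∈ Finset.Icc 1 (m + 1), F s := by
    rw [← Finset.Ico_add_one_right_eq_Icc, Finset.sum_Ico_eq_sum_range]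
    refine Finset.sum_congr (by congr 1) fun v _ => ?_
    rw [add_comm 1 v]
  have hrestrict : ∑ s ∈ Finset.Icc 1 (m + 1), F s = ∑ s ∈ Finset.Icc r (m + 1), F s := by
    refine (Finset.sum_subset ?_ ?_).symm
    · intro s hs
      simp only [mem_Icc] at hs ⊢
      omega
    · intro s hs hns
      simp only [mem_Icc] at hs hns
      have : ¬ r ≤ s := by omega
      rw [hF]
      simp only [if_neg this, mul_zero, zero_mul]
  have hFs : ∀ s ∈ Finset.Icc r (m + 1),
      F s = (-1 : K) ^ r * ((-β) ^ (s - r) * (Nat.choose (s - 1) (s - r) : K) * ds s) := by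
    intro s hs
    simp only [mem_Icc] at hs
    rw [hF]
    simp only [if_pos hs.1]
    have e1 : (-1 : K) ^ s = (-1 : K) ^ r * (-1 : K) ^ (s - r) := by
      rw [← pow_add]
      congr 1
      omega
    have e2 : (-β : K) ^ (s - r) = (-1 : K) ^ (s - r) * β ^ (s - r) := by
      rw [← neg_one_mul, mul_pow]
    rw [e1, e2]
    ring
  -- final assembly
  set E : K := ∑ S ∈ Finset.univ.powersetCard r, ∏ i ∈ S, x i with hE
  set Ssum : K := ∑ s ∈ Finset.Icc r (m + 1),
      (-β) ^ (s - r) * (Nat.choose (s - 1) (s - r) : K) * ds s with hS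
  have hkey : (-1 : K) ^ r * Ssum = (-1 : K) ^ r * (c * E) := by
    rw [hS, Finset.mul_sum]
    rw [← Finset.sum_congr rfl hFs]
    rw [← hrestrict, ← hshift, ← hFin, hmid]
    ring
  have hSE : Ssum = ds 0 * E := by
    have hne : (-1 : K) ^ r ≠ 0 := pow_ne_zero r (by norm_num)
    have := mul_left_cancel₀ hne hkey
    rw [this, htop]
  -- rewrite the goal
  have hgoal : ∀ s ∈ Finset.Icc r (m + 1),
      grothDet β x (fun i : Fin (m + 1) => if i.val < s then 1 else 0) = ds s / ds 0 := by
    intro s hs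
    simp only [mem_Icc] at hs
    rw [grothDet]
    have hm : m + 1 - 1 = m := rfl
    rw [show (Matrix.of fun i j : Fin (m + 1) =>
        x j ^ ((if i.val < s then 1 else 0) + (m + 1 - 1 - i.val)) * (1 + β * x j) ^ i.val)
        = (Matrix.of fun i j : Fin (m + 1) =>
        x j ^ ((if i.val < s then 1 else 0) + (m - i.val)) * (1 + β * x j) ^ i.val) from rfl]
    rw [show (Matrix.of fun i j : Fin (m + 1) => x j ^ (m + 1 - 1 - i.val))
        = (Matrix.of fun i j : Fin (m + 1) => x j ^ (m - i.val)) from rfl]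
    rw [hnum s (by omega) hs.2, hden]
  rw [Finset.sum_congr rfl fun s hs => by rw [hgoal s hs]]
  have : ∑ s ∈ Finset.Icc r (m + 1),
      (-β) ^ (s - r) * (Nat.choose (s - 1) (s - r) : K) * (ds s / ds 0)
      = Ssum / ds 0 := by
    rw [hS, Finset.sum_div]
    refine Finset.sum_congr rfl fun s _ => ?_
    rw [mul_div_assoc]
  rw [this, hSE, mul_comm (ds 0) E, mul_div_assoc, div_self hD0, mul_one]
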